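/- Let n be a positive integer and d_1, ..., d_n elements of Z/n that are each coprime to n (units of Z/n). Then the set of all subset sums { sum over i in I of d_i : I subset of {1,...,n} } equals all of Z/n. -/

import Mathlib

/-!
Let `S_k` be the set of subset sums of `d_1, …, d_k`, so that `S_{k+1} = S_k ∪ (d_{k+1} + S_k)`.
If `S_k` is not all of `ℤ/n`, it cannot be closed under `x ↦ d_{k+1} + x`: a set containing `0`
and closed under adding a unit `u` contains every multiple of `u`, i.e. everything. Hence
`|S_{k+1}| ≥ min(n, |S_k| + 1)`, and since `|S_0| = 1`, after `n` steps `|S_n| = n`.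
-/

open Finset

theorem AddSubmonoid.multiples_subset_of_add_mem {M : Type*} [AddMonoid M] {s : Set M} {g : M}
    (h0 : 0 ∈ s) (hs : ∀ x ∈ s, g + x ∈ s) : (AddSubmonoid.multiples g : Set M) ⊆ s := by
  rintro _ ⟨m, rfl⟩
  induction m with
  | zero => simpa using h0
  | succ m ih => simpa [succ_nsmul'] using hs _ ih

theorem ZMod.multiples_eq_top_of_isUnit {n : ℕ} [NeZero n] {u : ZMod n} (hu : IsUnit u) :
    AddSubmonoid.multiples u = ⊤ := by
  obtain ⟨v, rfl⟩ := hu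
  refine eq_top_iff.2 fun y _ => ⟨(y * ↑v⁻¹).val, ?_⟩
  simp [nsmul_eq_mul, mul_assoc]

section SubsetSums

variable {ι M : Type*} [AddCommMonoid M] [DecidableEq M]

def subsetSums (d : ι → M) (s : Finset ι) : Finset M :=
  s.powerset.image fun I => ∑ i ∈ I, d i

theorem mem_subsetSums {d : ι → M} {s : Finset ι} {x : M} :
    x ∈ subsetSums d s ↔ ∃ I ⊆ s, ∑ i ∈ I, d i = x := by
  simp [subsetSums]

theorem zero_mem_subsetSums (d : ι → M) (s : Finset ι) : 0 ∈ subsetSums d s :=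
  mem_subsetSums.2 ⟨∅, empty_subset s, sum_empty⟩

theorem subsetSums_insert [DecidableEq ι] (d : ι → M) {a : ι} {s : Finset ι} (ha : a ∉ s) :
    subsetSums d (insert a s) = subsetSums d s ∪ (subsetSums d s).image (d a + ·) := by
  rw [subsetSums, powerset_insert, image_union, image_image, subsetSums, image_image]
  congr 1
  refine image_congr fun I hI => ?_
  exact sum_insert fun h => ha (mem_powerset.1 hI h)

theorem card_lt_card_subsetSums_insert [DecidableEq ι] [Fintype M] (d : ι → M) {a : ι}
    {s : Finset ι} (ha : a ∉ s) (hda : AddSubmonoid.multiples (d a) = ⊤)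
    (hs : subsetSums d s ≠ univ) :
    #(subsetSums d s) < #(subsetSums d (insert a s)) := by
  have hnot_closed : ∃ x ∈ subsetSums d s, d a + x ∉ subsetSums d s := by
    by_contra! hclosed
    refine hs (eq_univ_of_forall fun y => ?_)
    have hmult := AddSubmonoid.multiples_subset_of_add_mem (zero_mem_subsetSums d s) hclosed
    rw [hda] at hmult
    exact hmult (Set.mem_univ y)
  obtain ⟨x, hx, hdx⟩ := hnot_closed
  rw [subsetSums_insert d ha]
  refine card_lt_card ⟨subset_union_left, fun h => hdx ?_⟩
  exact h (mem_union_right _ (mem_image_of_mem _ hx))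

theorem min_card_le_card_subsetSums [DecidableEq ι] [Fintype M] (d : ι → M)
    (hd : ∀ i, AddSubmonoid.multiples (d i) = ⊤) (s : Finset ι) :
    min (Fintype.card M) (#s + 1) ≤ #(subsetSums d s) := by
  induction s using Finset.induction_on with
  | empty => exact min_le_of_right_le (card_pos.2 ⟨0, zero_mem_subsetSums d ∅⟩)
  | @insert a s ha ih =>
    rw [card_insert_of_notMem ha]
    by_cases hs : subsetSums d s = univ
    · have hsub : subsetSums d s ⊆ subsetSums d (insert a s) := by
        rw [subsetSums_insert d ha]
        exact subset_union_left
      have := card_le_card hsub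
      rw [hs, card_univ] at this
      omega
    · have := card_lt_card_subsetSums_insert d ha (hd a) hs
      omega

end SubsetSums

theorem subset_sums_cover (n : ℕ) (hn : 0 < n) (d : Fin n → ZMod n)
    (hd : ∀ i, IsUnit (d i)) :
    ∀ x : ZMod n, ∃ I : Finset (Fin n), ∑ i ∈ I, d i = x := by
  have : NeZero n := ⟨hn.ne'⟩
  have hcard :=
    min_card_le_card_subsetSums d (fun i => ZMod.multiples_eq_top_of_isUnit (hd i)) univ
  rw [ZMod.card, card_univ, Fintype.card_fin, min_eq_left (Nat.le_succ n)] at hcard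
  have huniv : subsetSums d univ = univ :=
    eq_univ_of_card _ (le_antisymm (card_le_univ _) (by rwa [ZMod.card]))
  intro x
  obtain ⟨I, -, hI⟩ := mem_subsetSums.1 (huniv ▸ mem_univ x)
  exact ⟨I, hI⟩
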